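/- arXiv:2006.15726 — 2 statements merged into one kernel-verified Lean document; each statement's English description precedes it below -/
import Mathlib

section
/- Let L be a quadratic extension of F where |F| = p^n, and let s be coprime to p^{2n}-1 with s ≡ 1 (mod p^n - 1). Then for any fixed b ∈ L^× with b ∉ F, Σ_{a∈F} W_{L,s}(ab) = 0. -/
open scoped BigOperators

/-- The Weil sum `W_{F,s}(a) = ∑_{x ∈ F} μ(x^s - a x)`, where `μ` is the canonical
additive character `μ(x) = ζ_p^{Tr_{F/𝔽_p}(x)}` of the finite field `F`. -/
noncomputable def weilSum (p : ℕ) (F : Type) [Field F] [Fintype F]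
    [Algebra (ZMod p) F] (s : ℕ) (a : F) : ℂ :=
  ∑ x : F, Complex.exp (2 * Real.pi * Complex.I *
    ((Algebra.trace (ZMod p) F (x ^ s - a * x)).val : ℂ) / (p : ℂ))

/-!
Summing over `a ∈ F` first, orthogonality of the characters `a ↦ μ(a b x)` of `F` kills every `x`
with `Tr_{L/F}(b x) ≠ 0`, leaving `q` times the sum of `μ(x^s)` over the `F`-line
`Tr_{L/F}(b x) = 0`, say `F x₀`. As `a^s = a` on `F`, that sum is `∑_{a ∈ F} μ(a x₀^s)`, which
vanishes unless `Tr_{L/F}(x₀^s) = 0`. For a quadratic extension `Tr_{L/F}(y) = 0` means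
`y^q = -y`; applied to `b x₀` and to `x₀^s` this gives `(b^q)^s = b^s`, so `b^q = b` because
`x ↦ x^s` is injective on `L`, i.e. `b ∈ F`.
-/

open Finset Module

namespace FiniteField

theorem pow_eq_self_of_modEq_one {K : Type*} [GroupWithZero K] [Fintype K] {s : ℕ}
    (hs0 : s ≠ 0) (hs : s ≡ 1 [MOD Fintype.card K - 1]) (a : K) : a ^ s = a := by
  rcases eq_or_ne a 0 with rfl | ha
  · exact zero_pow hs0
  · have h1 := pow_card_sub_one_eq_one a ha
    rw [pow_eq_pow_mod s h1, hs, ← pow_eq_pow_mod 1 h1, pow_one]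

theorem pow_left_injective_of_coprime {K : Type*} [GroupWithZero K] [Fintype K] {s : ℕ}
    (hs0 : s ≠ 0) (hs : s.Coprime (Fintype.card K - 1)) :
    Function.Injective (· ^ s : K → K) := by
  have hunits : (Nat.card Kˣ).Coprime s := by
    rw [Nat.card_units, Nat.card_eq_fintype_card]; exact hs.symm
  intro a b (hab : a ^ s = b ^ s)
  rcases eq_or_ne a 0 with rfl | ha
  · rw [zero_pow hs0, eq_comm, pow_eq_zero_iff hs0] at hab
    exact hab.symm
  rcases eq_or_ne b 0 with rfl | hb
  · rwa [zero_pow hs0, pow_eq_zero_iff hs0] at hab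
  have := hunits.pow_left_bijective.injective
    (a₁ := Units.mk0 a ha) (a₂ := Units.mk0 b hb) (Units.ext (by simpa using hab))
  simpa using congrArg Units.val this

theorem neg_one_pow_of_coprime {K : Type*} [Field K] [Fintype K] {s : ℕ}
    (hs0 : s ≠ 0) (hs : s.Coprime (Fintype.card K - 1)) : (-1 : K) ^ s = -1 := by
  rcases Nat.even_or_odd s with he | ho
  · -- an even `s` forces `-1 = 1`, i.e. characteristic `2`
    have h : (-1 : K) = 1 := pow_left_injective_of_coprime hs0 hs (by simp [he.neg_one_pow])
    rw [he.neg_one_pow, h]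
  · exact ho.neg_one_pow

variable {K L : Type*} [Field K] [Fintype K] [Field L] [Algebra K L]

theorem mem_range_algebraMap_of_pow_card_eq_self [Finite L] {x : L}
    (hx : x ^ Fintype.card K = x) : x ∈ Set.range (algebraMap K L) := by
  rw [IsGalois.mem_range_algebraMap_iff_fixed]
  intro g
  obtain ⟨i, rfl⟩ := (bijective_frobeniusAlgEquivOfAlgebraic_pow K L).2 g
  rw [AlgEquiv.coe_pow]
  exact Function.iterate_fixed hx _

theorem trace_eq_zero_iff_pow_card_eq_neg [Finite L] (hrank : finrank K L = 2) (y : L) :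
    Algebra.trace K L y = 0 ↔ y ^ Fintype.card K = -y := by
  rw [← (algebraMap K L).injective.eq_iff, algebraMap_trace_eq_sum_pow, hrank,
    map_zero, sum_range_succ, sum_range_one, pow_zero, pow_one, pow_one, Nat.card_eq_fintype_card,
    add_eq_zero_iff_eq_neg']

theorem pow_card_eq_self_of_trace_eq_zero [Fintype L] (hrank : finrank K L = 2) {s : ℕ}
    (hs0 : s ≠ 0) (hs : s.Coprime (Fintype.card L - 1)) {b x : L} (hx : x ≠ 0)
    (hbx : Algebra.trace K L (b * x) = 0) (hxs : Algebra.trace K L (x ^ s) = 0) :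
    b ^ Fintype.card K = b := by
  set q := Fintype.card K
  rw [trace_eq_zero_iff_pow_card_eq_neg hrank] at hbx hxs
  have key : -((b ^ q) ^ s * x ^ s) = -(b ^ s * x ^ s) :=
    calc -((b ^ q) ^ s * x ^ s) = (b ^ q) ^ s * (x ^ s) ^ q := by rw [hxs, mul_neg]
      _ = ((b * x) ^ q) ^ s := by ring
      _ = (-1) ^ s * (b ^ s * x ^ s) := by rw [hbx, neg_eq_neg_one_mul, mul_pow, mul_pow]
      _ = -(b ^ s * x ^ s) := by rw [neg_one_pow_of_coprime hs0 hs, neg_one_mul]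
  exact pow_left_injective_of_coprime hs0 hs
    (mul_right_cancel₀ (pow_ne_zero s hx) (neg_injective key))

theorem exists_trace_mul_eq_zero_iff [Finite L] (hrank : finrank K L = 2) {b : L} (hb : b ≠ 0) :
    ∃ x₀ ≠ 0, ∀ x : L, Algebra.trace K L (b * x) = 0 ↔ ∃ a : K, algebraMap K L a * x₀ = x := by
  set D : L →ₗ[K] K := Algebra.trace K L ∘ₗ LinearMap.mulLeft K b
  have hD : LinearMap.range D = ⊤ := by
    refine LinearMap.range_eq_top.mpr fun t => ?_
    obtain ⟨y, rfl⟩ := Algebra.trace_surjective K L t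
    exact ⟨b⁻¹ * y, by simp [D, mul_inv_cancel_left₀ hb]⟩
  have hker : finrank K (LinearMap.ker D) = 1 := by
    have := LinearMap.finrank_range_add_finrank_ker D
    rw [hD, finrank_top, hrank, finrank_self] at this
    omega
  obtain ⟨⟨x₀, hx₀D⟩, hx₀, hspan⟩ := finrank_eq_one_iff'.mp hker
  refine ⟨x₀, fun h => hx₀ (Subtype.ext h), fun x => ⟨fun hx => ?_, ?_⟩⟩
  · obtain ⟨a, ha⟩ := hspan ⟨x, hx⟩
    exact ⟨a, by simpa [Algebra.smul_def] using congrArg Subtype.val ha⟩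
  · rintro ⟨a, rfl⟩
    have : D x₀ = 0 := hx₀D
    simp only [D, LinearMap.comp_apply, LinearMap.mulLeft_apply] at this
    rw [mul_left_comm, ← Algebra.smul_def, map_smul, this, smul_zero]

end FiniteField

noncomputable def traceAddChar (p : ℕ) [NeZero p] (K : Type*) [CommRing K]
    [Algebra (ZMod p) K] : AddChar K ℂ :=
  (AddChar.zmodChar p (Complex.isPrimitiveRoot_exp p (NeZero.ne p)).pow_eq_one).compAddMonoidHom
    (Algebra.trace (ZMod p) K).toAddMonoidHom

theorem weilSum_eq_sum_traceAddChar {p : ℕ} [NeZero p] (L : Type) [Field L] [Fintype L]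
    [Algebra (ZMod p) L] (s : ℕ) (a : L) :
    weilSum p L s a = ∑ x : L, traceAddChar p L (x ^ s - a * x) := by
  refine sum_congr rfl fun x _ => ?_
  rw [traceAddChar, AddChar.compAddMonoidHom_apply, AddChar.zmodChar_apply, ← Complex.exp_nat_mul]
  congr 1
  simp only [LinearMap.toAddMonoidHom_coe]
  ring

section traceAddChar

variable {p : ℕ} [Fact p.Prime]

theorem traceAddChar_isPrimitive (K : Type*) [Field K] [Finite K] [Algebra (ZMod p) K] :
    (traceAddChar p K).IsPrimitive := by
  refine AddChar.IsPrimitive.of_ne_one (AddChar.ne_one_iff.mpr ?_)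
  obtain ⟨u, hu⟩ := Algebra.trace_surjective (ZMod p) K 1
  refine ⟨u, fun h => ?_⟩
  rw [traceAddChar, AddChar.compAddMonoidHom_apply, LinearMap.toAddMonoidHom_coe, hu,
    (AddChar.zmodChar_primitive_of_primitive_root p
      (Complex.isPrimitiveRoot_exp p (NeZero.ne p))).zmod_char_eq_one_iff] at h
  exact one_ne_zero h

variable {K : Type*} {L : Type} [Field K] [Fintype K] [Field L] [Fintype L] [Algebra K L]
  [Algebra (ZMod p) K] [Algebra (ZMod p) L] [IsScalarTower (ZMod p) K L]

theorem traceAddChar_algebraMap_mul (a : K) (c : L) :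
    traceAddChar p L (algebraMap K L a * c) = traceAddChar p K (a * Algebra.trace K L c) := by
  simp only [traceAddChar, AddChar.compAddMonoidHom_apply, LinearMap.toAddMonoidHom_coe]
  rw [← Algebra.trace_trace (S := K), ← Algebra.smul_def, map_smul, smul_eq_mul]

theorem sum_traceAddChar_algebraMap_mul [DecidableEq K] (c : L) :
    ∑ a : K, traceAddChar p L (algebraMap K L a * c) =
      if Algebra.trace K L c = 0 then (Fintype.card K : ℂ) else 0 := by
  simp_rw [traceAddChar_algebraMap_mul]
  rw [AddChar.sum_mulShift _ (traceAddChar_isPrimitive K)]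
  split_ifs <;> simp

theorem sum_weilSum_algebraMap_mul [DecidableEq K] (s : ℕ) (b : L) :
    ∑ a : K, weilSum p L s (algebraMap K L a * b) =
      Fintype.card K * ∑ x ∈ univ.filter (fun x => Algebra.trace K L (b * x) = 0),
        traceAddChar p L (x ^ s) := by
  calc ∑ a : K, weilSum p L s (algebraMap K L a * b)
      = ∑ x : L, traceAddChar p L (x ^ s) *
          ∑ a : K, traceAddChar p L (algebraMap K L a * -(b * x)) := by
        simp_rw [weilSum_eq_sum_traceAddChar, mul_sum, ← AddChar.map_add_eq_mul]
        rw [sum_comm]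
        congr! 3
        ring
    _ = _ := by
        simp_rw [sum_traceAddChar_algebraMap_mul, map_neg, neg_eq_zero, mul_ite, mul_zero,
          ← sum_filter, mul_sum, mul_comm]

open FiniteField in
theorem sum_traceAddChar_pow_filter_trace_mul_eq_zero [DecidableEq K]
    (hrank : finrank K L = 2) {s : ℕ} (hs0 : s ≠ 0) (hs : s.Coprime (Fintype.card L - 1))
    (hs1 : s ≡ 1 [MOD Fintype.card K - 1]) {b : L} (hbK : b ∉ Set.range (algebraMap K L)) :
    ∑ x ∈ univ.filter (fun x => Algebra.trace K L (b * x) = 0), traceAddChar p L (x ^ s) = 0 := by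
  have hb : b ≠ 0 := fun h => hbK ⟨0, by rw [h, map_zero]⟩
  obtain ⟨x₀, hx₀, hker⟩ := exists_trace_mul_eq_zero_iff hrank hb
  classical
  have hline : univ.filter (fun x => Algebra.trace K L (b * x) = 0) =
      univ.image (fun a => algebraMap K L a * x₀) := by
    ext x
    simp [hker]
  have htr : Algebra.trace K L (x₀ ^ s) ≠ 0 := fun h =>
    hbK <| mem_range_algebraMap_of_pow_card_eq_self <|
      pow_card_eq_self_of_trace_eq_zero hrank hs0 hs hx₀ ((hker x₀).mpr ⟨1, by simp⟩) h
  rw [hline, sum_image fun a _ a' _ h => (algebraMap K L).injective (mul_right_cancel₀ hx₀ h)]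
  simp_rw [mul_pow, ← map_pow, pow_eq_self_of_modEq_one hs0 hs1]
  rw [sum_traceAddChar_algebraMap_mul, if_neg htr]

end traceAddChar

theorem weil_sum_orbit_sum_nonrational_general (p n : ℕ) [Fact p.Prime]
    (F L : Type) [Field F] [Fintype F] [Field L] [Fintype L]
    [Algebra (ZMod p) L] [Algebra F L]
    (hF : Fintype.card F = p ^ n) (hL : Fintype.card L = p ^ (2 * n))
    (s : ℕ) (hs0 : 0 < s) (hs : Nat.Coprime s (p ^ (2 * n) - 1))
    (hs1 : s ≡ 1 [MOD p ^ n - 1])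
    (b : L) (hbF : b ∉ Set.range (algebraMap F L)) :
    ∑ a : F, weilSum p L s (algebraMap F L a * b) = 0 := by
  classical
  have : CharP L p := charP_of_injective_algebraMap (algebraMap (ZMod p) L).injective p
  have : CharP F p := (algebraMap F L).charP (algebraMap F L).injective p
  let : Algebra (ZMod p) F := ZMod.algebra F p
  have : IsScalarTower (ZMod p) F L := .of_algebraMap_eq' (RingHom.ext_zmod _ _)
  have hrank : finrank F L = 2 := by
    refine Nat.pow_right_injective (Fintype.one_lt_card (α := F))
      (?_ : Fintype.card F ^ finrank F L = Fintype.card F ^ 2)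
    rw [← Module.card_eq_pow_finrank, hL, hF, ← pow_mul, mul_comm]
  rw [sum_weilSum_algebraMap_mul, sum_traceAddChar_pow_filter_trace_mul_eq_zero hrank hs0.ne'
    (hL ▸ hs) (hF ▸ hs1) hbF, mul_zero]

/-- if `L/F` is quadratic, `gcd(s, p^{2n}-1) = 1`, `s ≡ 1 (mod p^n-1)`,
and `b ∈ L^×` with `b ∉ F`, then `∑_{a ∈ F} W_{L,s}(ab) = 0`. -/
theorem weil_sum_orbit_sum_nonrational (p n : ℕ) [Fact p.Prime] (hn : 0 < n)
    (F L : Type) [Field F] [Fintype F] [Field L] [Fintype L]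
    [Algebra (ZMod p) L] [Algebra F L]
    (hF : Fintype.card F = p ^ n) (hL : Fintype.card L = p ^ (2 * n))
    (s : ℕ) (hs0 : 0 < s) (hs : Nat.Coprime s (p ^ (2 * n) - 1))
    (hs1 : s ≡ 1 [MOD p ^ n - 1])
    (b : L) (hb : b ≠ 0) (hbF : b ∉ Set.range (algebraMap F L)) :
    ∑ a : F, weilSum p L s (algebraMap F L a * b) = 0 :=
  weil_sum_orbit_sum_nonrational_general p n F L hF hL s hs0 hs hs1 b hbF
end

section
/- Let ζ_t be a primitive t-th root of unity in L with t | p^n + 1 and t > 1. Then W_{L,s}(ζ_t) = p^n(d_1 δ_{1,t} + d_2 δ_{2,t} - 1), where δ_{i,t} = 1 if t divides (p^n+1)/d_i and 0 otherwise. -/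
/-!
Let `q = p ^ n = #F`, `μ` the canonical additive character of `L`, `W = W_{L,s}(ζ)` and
`b x = x ^ s - ζ x`. Because `c ^ s = c` on `F`, the substitution `x ↦ c x` gives
`∑ₓ μ (c b x) = W` for every `c ∈ Fˣ`; summing over all of `F` and using orthogonality of the
characters `c ↦ μ (c y)` of `F` yields `q² + (q - 1) W = q · #{x | Tr_{L/F} (b x) = 0}`.

Since `Tr_{L/F} b = b + b ^ q`, it remains to count the `x` with `b ^ q = -b`. For `x ≠ 0` the
element `u = x ^ (q - 1)` satisfies `u ^ (q + 1) = 1`, as does `ζ`, and then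
`b ^ q + b = x (u ^ k - ζ) (1 - ζ⁻¹ u ^ (1 - k))`. The zeros are thus `x = 0` and the solutions
of `x ^ ((q - 1) k) = ζ` or `x ^ ((q - 1) (k - 1)) = ζ⁻¹`; no `x` solves both, since
`gcd (2k - 1, q + 1) = 1` and `ζ ≠ 1`. In the cyclic group `Lˣ` of order `(q - 1)(q + 1)` the
first equation has `(q - 1) d₁` solutions if `t ∣ (q + 1) / d₁` and none otherwise, and likewise
the second with `d₂`.
-/

open scoped BigOperators

open Finset

noncomputable def traceChar (p : ℕ) [NeZero p] (K : Type*) [CommRing K] [Algebra (ZMod p) K] :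
    AddChar K ℂ :=
  ZMod.stdAddChar.compAddMonoidHom (Algebra.trace (ZMod p) K).toAddMonoidHom

section TraceCharacter

variable (p : ℕ)

theorem weilSum_eq_sum_traceChar [NeZero p] (L : Type) [Field L] [Fintype L]
    [Algebra (ZMod p) L] (s : ℕ) (a : L) :
    weilSum p L s a = ∑ x, traceChar p L (x ^ s - a * x) := by
  simp [weilSum, traceChar, ZMod.stdAddChar_apply, ZMod.toCircle_apply]

variable [Fact p.Prime]

theorem isPrimitive_traceChar (K : Type*) [Field K] [Finite K] [Algebra (ZMod p) K] :
    (traceChar p K).IsPrimitive := by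
  refine AddChar.IsPrimitive.of_ne_one fun h => Algebra.trace_ne_zero (ZMod p) K ?_
  ext x
  exact ZMod.injective_stdAddChar <|
    (DFunLike.congr_fun h x).trans (AddChar.map_zero_eq_one _).symm

variable {F L : Type*} [Field F] [Field L] [Finite L] [Algebra (ZMod p) F] [Algebra (ZMod p) L]
  [Algebra F L] [IsScalarTower (ZMod p) F L]

theorem traceChar_algebraMap_mul (c : F) (b : L) :
    traceChar p L (algebraMap F L c * b) = traceChar p F (c * Algebra.trace F L b) := by
  have := Finite.of_injective _ (FaithfulSMul.algebraMap_injective F L)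
  simp [traceChar, ← Algebra.trace_trace (R := ZMod p) (S := F), ← Algebra.smul_def]

theorem sum_traceChar_algebraMap_mul [Fintype F] [DecidableEq F] (b : L) :
    ∑ c : F, traceChar p L (algebraMap F L c * b) =
      if Algebra.trace F L b = 0 then (Fintype.card F : ℂ) else 0 := by
  simp only [traceChar_algebraMap_mul]
  exact_mod_cast AddChar.sum_mulShift _ (isPrimitive_traceChar p F)

end TraceCharacter

theorem card_add_mul_weilSum (p : ℕ) [Fact p.Prime] {F L : Type} [Field F] [Fintype F] [Field L]
    [Fintype L] [Algebra (ZMod p) F] [Algebra (ZMod p) L] [Algebra F L]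
    [IsScalarTower (ZMod p) F L] [DecidableEq F] {s : ℕ} (hs : ∀ c : F, c ^ s = c) (a : L) :
    (Fintype.card L : ℂ) + (Fintype.card F - 1) * weilSum p L s a =
      Fintype.card F * #{x | Algebra.trace F L (x ^ s - a * x) = 0} := by
  have hunit : ∀ c : F, c ≠ 0 →
      ∑ x, traceChar p L (algebraMap F L c * (x ^ s - a * x)) = weilSum p L s a := by
    intro c hc
    rw [weilSum_eq_sum_traceChar]
    refine Fintype.sum_bijective _ (mulLeft_bijective₀ _ ((map_ne_zero (algebraMap F L)).2 hc))
      _ _ fun x => ?_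
    rw [mul_pow, ← map_pow, hs, mul_sub, mul_left_comm]
  calc (Fintype.card L : ℂ) + (Fintype.card F - 1) * weilSum p L s a
      = ∑ c : F, ∑ x, traceChar p L (algebraMap F L c * (x ^ s - a * x)) := by
        rw [← add_sum_erase _ _ (mem_univ 0),
          sum_congr rfl fun c hc => hunit c (ne_of_mem_erase hc), sum_const,
          card_erase_of_mem (mem_univ _), card_univ, nsmul_eq_mul,
          Nat.cast_pred Fintype.card_pos]
        simp
    _ = Fintype.card F * #{x | Algebra.trace F L (x ^ s - a * x) = 0} := by
        rw [sum_comm]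
        simp_rw [sum_traceChar_algebraMap_mul p]
        rw [sum_ite, sum_const_zero, add_zero, sum_const, nsmul_eq_mul, mul_comm]

theorem FiniteField.pow_one_add_mul_card_sub_one {F : Type*} [Field F] [Fintype F] (k : ℕ) (c : F) :
    c ^ (1 + k * (Fintype.card F - 1)) = c := by
  rcases eq_or_ne c 0 with rfl | hc
  · exact zero_pow (by omega)
  · rw [pow_add, pow_mul', FiniteField.pow_card_sub_one_eq_one c hc, one_pow, pow_one, mul_one]

theorem IsCyclic.card_filter_pow_eq {G : Type*} [CommGroup G] [Fintype G] [DecidableEq G]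
    [IsCyclic G] (m : ℕ) (a : G) :
    #{x | x ^ m = a} = if a ^ (Fintype.card G / (Fintype.card G).gcd m) = 1 then
      (Fintype.card G).gcd m else 0 := by
  set N := Fintype.card G
  set g := N.gcd m
  have hg : 0 < g := Nat.gcd_pos_of_pos_left _ Fintype.card_pos
  have hNg : 0 < N / g := Nat.div_pos (Nat.le_of_dvd Fintype.card_pos (Nat.gcd_dvd_left _ _)) hg
  have hker : #{x : G | x ^ m = 1} = g := by
    have := IsCyclic.card_powMonoidHom_ker (G := G) m
    rw [Nat.card_eq_fintype_card, Fintype.card_subtype, Nat.card_eq_fintype_card] at this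
    simpa only [MonoidHom.mem_ker, powMonoidHom_apply] using this
  have hfiber : ∀ y ∈ univ.image (· ^ m), #{x : G | x ^ m = y} = g := by
    intro y hy
    obtain ⟨x, -, rfl⟩ := mem_image.1 hy
    rw [← hker]
    exact MonoidHom.card_fiber_eq_of_mem_range (powMonoidHom m) ⟨x, rfl⟩ ⟨1, one_pow m⟩
  have hpow : ∀ x : G, (x ^ m) ^ (N / g) = 1 := by
    intro x
    rw [← pow_mul, ← Nat.mul_div_assoc _ (Nat.gcd_dvd_left _ _), mul_comm,
      Nat.mul_div_assoc _ (Nat.gcd_dvd_right _ _), pow_mul, pow_card_eq_one, one_pow]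
  have himage : univ.image (· ^ m) = ({y : G | y ^ (N / g) = 1} : Finset G) := by
    refine eq_of_subset_of_card_le (fun y hy => ?_) ?_
    · obtain ⟨x, -, rfl⟩ := mem_image.1 hy
      simpa using hpow x
    · have hcard : #(univ.image (· ^ m : G → G)) * g = N := by
        rw [← sum_const_nat hfiber, ← card_eq_sum_card_image]
        rfl
      rw [Nat.eq_div_of_mul_eq_left hg.ne' hcard]
      exact IsCyclic.card_pow_eq_one_le hNg
  split_ifs with ha
  · have : a ∈ univ.image (· ^ m) := by rw [himage]; simpa using ha
    exact hfiber a this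
  · rw [card_eq_zero, filter_eq_empty_iff]
    rintro x - rfl
    exact ha (hpow x)

section RootCount

variable {L : Type*} [Field L] [Fintype L]

theorem FiniteField.card_filter_pow_eq [DecidableEq L] {m : ℕ} (hm : m ≠ 0) {a : L} (ha : a ≠ 0) :
    #{x : L | x ^ m = a} = if a ^ ((Fintype.card L - 1) / (Fintype.card L - 1).gcd m) = 1 then
      (Fintype.card L - 1).gcd m else 0 := by
  have hunits : #{x : L | x ^ m = a} = #{u : Lˣ | u ^ m = Units.mk0 a ha} := by
    refine (card_bij (fun (u : Lˣ) _ => (u : L)) (fun u hu => ?_)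
      (fun u _ v _ => Units.val_injective.eq_iff.1) (fun x hx => ?_)).symm
    · simpa [Units.ext_iff] using hu
    · have hx : x ^ m = a := (mem_filter.1 hx).2
      have hx0 : x ≠ 0 := by rintro rfl; exact ha (by rw [← hx, zero_pow hm])
      exact ⟨Units.mk0 x hx0, by simp [Units.ext_iff, hx], rfl⟩
  rw [hunits, IsCyclic.card_filter_pow_eq, Fintype.card_units]
  simp only [Units.ext_iff, Units.val_pow_eq_pow_val, Units.val_mk0, Units.val_one]

theorem card_filter_pow_sub_one_mul_eq [DecidableEq L] {q : ℕ} (hL : Fintype.card L = q ^ 2)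
    {j : ℕ} (hj : j ≠ 0) {t : ℕ} {ζ : L} (hζ : IsPrimitiveRoot ζ t) (ht : t ≠ 0) :
    #{x : L | x ^ ((q - 1) * j) = ζ} =
      if t ∣ (q + 1) / j.gcd (q + 1) then (q - 1) * j.gcd (q + 1) else 0 := by
  have hq : 0 < q - 1 :=
    Nat.sub_pos_of_lt <| (one_lt_pow_iff two_ne_zero).1 (hL ▸ Fintype.one_lt_card)
  have hL' : Fintype.card L - 1 = (q - 1) * (q + 1) := by
    rw [hL, mul_comm, ← Nat.sq_sub_sq, one_pow]
  simp only [FiniteField.card_filter_pow_eq (Nat.mul_ne_zero hq.ne' hj) (hζ.ne_zero ht),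
    hζ.pow_eq_one_iff_dvd, hL', Nat.gcd_mul_left, Nat.mul_div_mul_left _ _ hq,
    Nat.gcd_comm (q + 1) j]

theorem pow_sub_one_pow_add_one_eq_one {q : ℕ} (hL : Fintype.card L = q ^ 2) {x : L}
    (hx : x ≠ 0) : (x ^ (q - 1)) ^ (q + 1) = 1 := by
  have hL' : Fintype.card L - 1 = (q - 1) * (q + 1) := by
    rw [hL, mul_comm, ← Nat.sq_sub_sq, one_pow]
  rw [← pow_mul, ← hL', FiniteField.pow_card_sub_one_eq_one x hx]

end RootCount

theorem Nat.coprime_two_mul_sub_one_of_coprime {q k : ℕ} (hk : k ≠ 0)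
    (h : Nat.Coprime (1 + k * (q - 1)) (q ^ 2 - 1)) : Nat.Coprime (2 * k - 1) (q + 1) := by
  rcases q with _ | q
  · exact Nat.coprime_one_right _
  have hs : Nat.Coprime (1 + k * q) (q + 2) :=
    h.coprime_dvd_right ⟨q, by rw [← one_pow 2, Nat.sq_sub_sq]; simp⟩
  have hsum : 1 + k * q + (2 * k - 1) = k * (q + 2) := by
    zify [show 1 ≤ 2 * k by omega]
    ring
  have hdvd : Nat.gcd (2 * k - 1) (q + 2) ∣ 1 + k * q :=
    (Nat.dvd_add_left (Nat.gcd_dvd_left _ _)).1 <|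
      hsum ▸ dvd_mul_of_dvd_right (Nat.gcd_dvd_right _ _) k
  exact Nat.eq_one_of_dvd_one ((Nat.dvd_gcd hdvd (Nat.gcd_dvd_right _ _)).trans hs.gcd_eq_one.dvd)

theorem eq_one_of_pow_eq_of_pow_pred_mul_eq_one {M : Type*} [Monoid M] {u ζ : M} {k m : ℕ}
    (hcop : Nat.Coprime (2 * k - 1) m) (hu : u ^ m = 1) (h₁ : u ^ k = ζ)
    (h₂ : u ^ (k - 1) * ζ = 1) : ζ = 1 := by
  have h : u ^ (2 * k - 1) = 1 := by rw [show 2 * k - 1 = (k - 1) + k by omega, pow_add, h₁, h₂]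
  rw [← h₁, (by simpa [hcop.gcd_eq_one] using pow_gcd_eq_one.2 ⟨h, hu⟩ : u = 1), one_pow]

section QuadraticExtension

variable {F L : Type*} [Field F] [Fintype F] [Field L] [Fintype L] [Algebra F L]

theorem finrank_eq_two_of_card_eq_sq (hL : Fintype.card L = Fintype.card F ^ 2) :
    Module.finrank F L = 2 := by
  rw [Module.card_eq_pow_finrank (K := F) (V := L)] at hL
  exact Nat.pow_right_injective (Fintype.one_lt_card (α := F)) hL

theorem trace_eq_zero_iff_pow_card_eq_neg (hL : Fintype.card L = Fintype.card F ^ 2) (b : L) :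
    Algebra.trace F L b = 0 ↔ b ^ Fintype.card F = -b := by
  have h := FiniteField.algebraMap_trace_eq_sum_pow F L b
  rw [finrank_eq_two_of_card_eq_sq hL, Finset.sum_range_succ, Finset.sum_range_one,
    Nat.card_eq_fintype_card, pow_zero, pow_one, pow_one] at h
  rw [← (algebraMap F L).injective.eq_iff, h, map_zero, add_comm, add_eq_zero_iff_eq_neg]

omit [Fintype L] in
theorem FiniteField.sub_pow_card (a b : L) :
    (a - b) ^ Fintype.card F = a ^ Fintype.card F - b ^ Fintype.card F :=
  map_sub (FiniteField.frobeniusAlgHom F L) a b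

omit [Fintype L] in
theorem pow_card_eq_neg_iff {x u ζ : L} (hx : x ≠ 0) (hxu : x ^ Fintype.card F = x * u)
    (hu : u ^ Fintype.card F * u = 1) (hζ : ζ ^ Fintype.card F * ζ = 1) {k : ℕ} (hk : k ≠ 0) :
    (x * (u ^ k - ζ)) ^ Fintype.card F = -(x * (u ^ k - ζ)) ↔
      u ^ k = ζ ∨ u ^ (k - 1) = ζ⁻¹ := by
  have hζ0 : ζ ≠ 0 := right_ne_zero_of_mul_eq_one hζ
  have hu0 : u ≠ 0 := right_ne_zero_of_mul_eq_one hu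
  obtain ⟨j, rfl⟩ := Nat.exists_eq_add_one_of_ne_zero hk
  have hinv : (u ^ Fintype.card F) ^ j * u ^ j = 1 := by rw [← mul_pow, hu, one_pow]
  have key : ζ * u ^ j * ((x * (u ^ (j + 1) - ζ)) ^ Fintype.card F + x * (u ^ (j + 1) - ζ)) =
      x * ((u ^ (j + 1) - ζ) * (ζ * u ^ j - 1)) := by
    rw [mul_pow, hxu, FiniteField.sub_pow_card, ← pow_mul, mul_comm (j + 1), pow_mul]
    linear_combination
      (x * ζ * u * u ^ Fintype.card F) * hinv + (x * ζ) * hu - (x * u ^ j * u) * hζ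
  have hinv_iff : u ^ j = ζ⁻¹ ↔ ζ * u ^ j = 1 :=
    ⟨fun h => h ▸ mul_inv_cancel₀ hζ0, eq_inv_of_mul_eq_one_right⟩
  rw [Nat.add_sub_cancel, hinv_iff, ← add_eq_zero_iff_eq_neg,
    ← mul_right_inj' (mul_ne_zero hζ0 (pow_ne_zero j hu0)), key, mul_zero]
  simp [hx, sub_eq_zero]

theorem pow_card_eq_neg_iff_of_ne_zero (hL : Fintype.card L = Fintype.card F ^ 2) {ζ : L}
    (hζ : ζ ^ (Fintype.card F + 1) = 1) {k : ℕ} (hk : k ≠ 0) {x : L} (hx : x ≠ 0) :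
    (x ^ (1 + k * (Fintype.card F - 1)) - ζ * x) ^ Fintype.card F =
        -(x ^ (1 + k * (Fintype.card F - 1)) - ζ * x) ↔
      x ^ ((Fintype.card F - 1) * k) = ζ ∨ x ^ ((Fintype.card F - 1) * (k - 1)) = ζ⁻¹ := by
  set q := Fintype.card F
  have hxu : x ^ q = x * x ^ (q - 1) := by
    rw [← pow_succ', Nat.sub_add_cancel Fintype.card_pos]
  have hb : x ^ (1 + k * (q - 1)) - ζ * x = x * ((x ^ (q - 1)) ^ k - ζ) := by ring
  rw [hb, pow_mul, pow_mul]
  refine pow_card_eq_neg_iff hx hxu ?_ ?_ hk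
  · rw [← pow_succ, pow_sub_one_pow_add_one_eq_one hL hx]
  · rw [← pow_succ, hζ]

theorem card_filter_pow_card_eq_neg [DecidableEq L] (hL : Fintype.card L = Fintype.card F ^ 2)
    {ζ : L} (hζ : ζ ^ (Fintype.card F + 1) = 1) (hζ1 : ζ ≠ 1) {k : ℕ} (hk : k ≠ 0)
    (hcop : Nat.Coprime (2 * k - 1) (Fintype.card F + 1)) :
    #{x : L | (x ^ (1 + k * (Fintype.card F - 1)) - ζ * x) ^ Fintype.card F =
        -(x ^ (1 + k * (Fintype.card F - 1)) - ζ * x)} =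
      1 + #{x : L | x ^ ((Fintype.card F - 1) * k) = ζ} +
        #{x : L | x ^ ((Fintype.card F - 1) * (k - 1)) = ζ⁻¹} := by
  set q := Fintype.card F
  have hq : 1 < q := Fintype.one_lt_card
  have hζ0 : ζ ≠ 0 := by rintro rfl; simp at hζ
  set S₁ : Finset L := {x | x ^ ((q - 1) * k) = ζ}
  set S₂ : Finset L := {x | x ^ ((q - 1) * (k - 1)) = ζ⁻¹}
  have hdisj : Disjoint S₁ S₂ := by
    refine disjoint_filter.2 fun x _ h1 h2 => hζ1 ?_
    have hx : x ≠ 0 := ne_zero_pow (Nat.mul_ne_zero (by omega) hk) (h1 ▸ hζ0)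
    rw [pow_mul] at h1 h2
    exact eq_one_of_pow_eq_of_pow_pred_mul_eq_one hcop (pow_sub_one_pow_add_one_eq_one hL hx)
      h1 (by rw [h2, inv_mul_cancel₀ hζ0])
  have h0 : (0 : L) ∉ S₁ ∪ S₂ := by
    simp only [S₁, S₂, mem_union, mem_filter, mem_univ, true_and, not_or]
    refine ⟨by rw [zero_pow (Nat.mul_ne_zero (by omega) hk)]; exact hζ0.symm, ?_⟩
    rw [zero_pow_eq]
    split_ifs
    · exact fun h => hζ1 (inv_eq_one.1 h.symm)
    · exact fun h => hζ0 (inv_eq_zero.1 h.symm)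
  have hset : ({x | (x ^ (1 + k * (q - 1)) - ζ * x) ^ q = -(x ^ (1 + k * (q - 1)) - ζ * x)} :
      Finset L) = insert 0 (S₁ ∪ S₂) := by
    ext x
    rcases eq_or_ne x 0 with rfl | hx
    · simp [zero_pow (show q ≠ 0 by omega)]
    simpa only [S₁, S₂, mem_filter, mem_univ, true_and, mem_insert, hx, false_or, mem_union]
      using pow_card_eq_neg_iff_of_ne_zero hL hζ hk hx
  rw [hset, card_insert_of_notMem h0, card_union_of_disjoint hdisj]
  ring

end QuadraticExtension

theorem weil_sum_at_root_of_unity_general (p n : ℕ) [Fact p.Prime]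
    (F L : Type) [Field F] [Fintype F] [Field L] [Fintype L]
    [Algebra (ZMod p) L] [Algebra F L]
    (hF : Fintype.card F = p ^ n) (hL : Fintype.card L = p ^ (2 * n))
    (k s : ℕ) (hsk : s = 1 + k * (p ^ n - 1)) (hs : Nat.Coprime s (p ^ (2 * n) - 1))
    (hk2 : 2 ≤ k)
    (t : ℕ) (ht1 : 1 < t) (htdvd : t ∣ p ^ n + 1) (ζ : L) (hζ : IsPrimitiveRoot ζ t) :
    weilSum p L s ζ =
      (p : ℂ) ^ n *
        ((if t ∣ (p ^ n + 1) / Nat.gcd k (p ^ n + 1) then (Nat.gcd k (p ^ n + 1) : ℂ) else 0) +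
         (if t ∣ (p ^ n + 1) / Nat.gcd (k - 1) (p ^ n + 1) then
            (Nat.gcd (k - 1) (p ^ n + 1) : ℂ) else 0) - 1) := by
  classical
  have : CharP L p := charP_of_injective_algebraMap (algebraMap (ZMod p) L).injective p
  have : CharP F p := (algebraMap F L).charP (algebraMap F L).injective p
  -- any `ZMod p`-algebra structure on `F` is compatible, as ring maps out of `ZMod p` are unique
  let : Algebra (ZMod p) F := ZMod.algebra F p
  have : IsScalarTower (ZMod p) F L := .of_algebraMap_eq' (Subsingleton.elim _ _)
  have hpq : (p : ℂ) ^ n = Fintype.card F := by rw [hF, Nat.cast_pow]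
  rw [pow_mul', ← hF] at hL hs
  rw [← hF] at hsk htdvd ⊢
  subst hsk
  set q := Fintype.card F
  have hq : 1 < q := Fintype.one_lt_card (α := F)
  have hζq : ζ ^ (q + 1) = 1 := (hζ.pow_eq_one_iff_dvd _).2 htdvd
  have hcop := Nat.coprime_two_mul_sub_one_of_coprime (by omega) hs
  have hcount := card_add_mul_weilSum p (FiniteField.pow_one_add_mul_card_sub_one (F := F) k) ζ
  rw [filter_congr fun x _ => trace_eq_zero_iff_pow_card_eq_neg hL _,
    card_filter_pow_card_eq_neg hL hζq (hζ.ne_one ht1) (by omega) hcop,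
    card_filter_pow_sub_one_mul_eq hL (by omega) hζ (by omega),
    card_filter_pow_sub_one_mul_eq hL (by omega) hζ.inv (by omega), hL] at hcount
  rw [hpq]
  refine mul_left_cancel₀ (sub_ne_zero.2 (by exact_mod_cast hq.ne' : (q : ℂ) ≠ 1)) ?_
  split_ifs at hcount ⊢ <;> push_cast [Nat.cast_sub hq.le] at hcount ⊢ <;>
    linear_combination hcount

/-- for `ζ_t` a primitive `t`-th root of unity in `L` with `t ∣ p^n + 1`
and `t > 1`, `W_{L,s}(ζ_t) = p^n(d₁δ_{1,t} + d₂δ_{2,t} - 1)`, where `δ_{i,t} = 1` if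
`t ∣ (p^n+1)/dᵢ` and `0` otherwise. -/
theorem weil_sum_at_root_of_unity (p n : ℕ) [Fact p.Prime] (hn : 0 < n)
    (F L : Type) [Field F] [Fintype F] [Field L] [Fintype L]
    [Algebra (ZMod p) L] [Algebra F L]
    (hF : Fintype.card F = p ^ n) (hL : Fintype.card L = p ^ (2 * n))
    (k s : ℕ) (hsk : s = 1 + k * (p ^ n - 1)) (hs : Nat.Coprime s (p ^ (2 * n) - 1))
    (hp : Odd p) (hk2 : 2 ≤ k) (hkp : k ≤ p ^ n)
    (t : ℕ) (ht1 : 1 < t) (htdvd : t ∣ p ^ n + 1) (ζ : L) (hζ : IsPrimitiveRoot ζ t) :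
    weilSum p L s ζ =
      (p : ℂ) ^ n *
        ((if t ∣ (p ^ n + 1) / Nat.gcd k (p ^ n + 1) then (Nat.gcd k (p ^ n + 1) : ℂ) else 0) +
         (if t ∣ (p ^ n + 1) / Nat.gcd (k - 1) (p ^ n + 1) then
            (Nat.gcd (k - 1) (p ^ n + 1) : ℂ) else 0) - 1) :=
  weil_sum_at_root_of_unity_general p n F L hF hL k s hsk hs hk2 t ht1 htdvd ζ hζ
end
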